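/- Let H and G be finite simple graphs. Then |EdgInj(H,G)| = Σ_ρ |Emb(H/ρ, G)|, where the sum ranges over all edge-injective partitions ρ of V(H). More precisely, the edge-injective homomorphisms from H to G are in bijection with the pairs (ρ, g), where ρ is an edge-injective partition of V(H) and g is an embedding of the quotient graph H/ρ into G. -/

import Mathlib

open SimpleGraph

/-- A homomorphism `φ : H →g G` is *edge-injective* if distinct edges of `H`
are mapped to distinct edges of `G`. -/
def EdgeInjective {V W : Type*} {H : SimpleGraph V} {G : SimpleGraph W} (φ : H →g G) : Prop :=
  ∀ e ∈ H.edgeSet, ∀ f ∈ H.edgeSet, Sym2.map φ e = Sym2.map φ f → e = f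

/-- A partition (setoid) of the vertex set of `H` is *edge-injective* if every block is an
independent set of `H` and between any two distinct blocks there is at most one edge of `H`. -/
def EdgeInjectivePartition {V : Type*} (H : SimpleGraph V) (s : Setoid V) : Prop :=
  (∀ u v, s.r u v → ¬ H.Adj u v) ∧
  (∀ u v u' v', H.Adj u v → H.Adj u' v' → s.r u u' → s.r v v' → u = u' ∧ v = v')

/-- The quotient graph `H/ρ` of a partition `ρ` of the vertices of `H`: distinct blocks are
adjacent iff some edge of `H` joins them. -/
def quotientGraph {V : Type*} (H : SimpleGraph V) (s : Setoid V) : SimpleGraph (Quotient s) where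
  Adj A B := A ≠ B ∧ ∃ u v, Quotient.mk s u = A ∧ Quotient.mk s v = B ∧ H.Adj u v
  symm := by
    constructor
    rintro A B ⟨hne, u, w, hu, hw, h⟩
    exact ⟨hne.symm, w, u, hw, hu, h.symm⟩
  loopless := by
    constructor
    rintro A ⟨hne, -⟩
    exact hne rfl

/-!
An edge-injective homomorphism `φ : H → G` factors as `H → H/ker φ → G`. The kernel partition is
edge-injective exactly because `φ` is (blocks are independent since `G` has no loops, and two edges
between the same pair of blocks have the same image), and the induced map `H/ker φ → G` is an
injective homomorphism. Conversely, for an edge-injective partition `ρ` the quotient map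
`H → H/ρ` is an edge-injective homomorphism, so its composite with an embedding `H/ρ → G` is again
edge-injective, and its kernel is `ρ`. The two constructions are mutually inverse.
-/

open Function

instance Setoid.instFinite {α : Type*} [Finite α] : Finite (Setoid α) :=
  Finite.of_injective (⇑) fun _ _ h => Setoid.eq_iff_rel_eq.mpr h

section EdgeInjective

variable {U V W : Type*} {F : SimpleGraph U} {H : SimpleGraph V} {G : SimpleGraph W}

theorem edgeInjective_of_injective {φ : H →g G} (hφ : Injective φ) : EdgeInjective φ :=
  fun _ _ _ _ h => Sym2.map.injective hφ h

theorem EdgeInjective.comp {ψ : H →g G} {φ : F →g H} (hψ : EdgeInjective ψ)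
    (hφ : EdgeInjective φ) : EdgeInjective (ψ.comp φ) := by
  intro e he f hf h
  refine hφ e he f hf (hψ _ (φ.map_mem_edgeSet he) _ (φ.map_mem_edgeSet hf) ?_)
  rw [Sym2.map_map, Sym2.map_map]
  exact h

theorem EdgeInjective.edgeInjectivePartition_ker {φ : H →g G} (hφ : EdgeInjective φ) :
    EdgeInjectivePartition H (Setoid.ker φ) := by
  refine ⟨fun u v huv hadj => G.loopless.irrefl _ (huv ▸ φ.map_adj hadj), ?_⟩
  intro u v u' v' huv hu'v' hu hv
  have hmap : Sym2.map φ s(u, v) = Sym2.map φ s(u', v') := by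
    simp only [Sym2.map_mk]
    rw [hu, hv]
  rcases Sym2.eq_iff.mp (hφ _ huv _ hu'v' hmap) with ⟨rfl, rfl⟩ | ⟨rfl, rfl⟩
  · exact ⟨rfl, rfl⟩
  · exact absurd (hu ▸ φ.map_adj huv) (G.loopless.irrefl _)

end EdgeInjective

namespace quotientGraph

variable {V W : Type*} {H : SimpleGraph V} {G : SimpleGraph W} {s : Setoid V}

def mkHom (hs : ∀ u v, s u v → ¬ H.Adj u v) : H →g quotientGraph H s where
  toFun := Quotient.mk s
  map_rel' {u v} huv := ⟨fun h => hs u v (Quotient.exact h) huv, u, v, rfl, rfl, huv⟩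

theorem edgeInjective_mkHom (hs : EdgeInjectivePartition H s) : EdgeInjective (mkHom hs.1) := by
  intro e he f hf h
  induction e with | _ u v => ?_
  induction f with | _ u' v' => ?_
  rw [mem_edgeSet] at he hf
  simp only [Sym2.map_mk, Sym2.eq_iff] at h
  rcases h with ⟨hu, hv⟩ | ⟨hu, hv⟩
  · obtain ⟨rfl, rfl⟩ := hs.2 u v u' v' he hf (Quotient.exact hu) (Quotient.exact hv)
    rfl
  · obtain ⟨rfl, rfl⟩ := hs.2 u v v' u' he hf.symm (Quotient.exact hu) (Quotient.exact hv)
    exact Sym2.eq_swap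

theorem ker_comp_mkHom {hs : ∀ u v, s u v → ¬ H.Adj u v} {g : quotientGraph H s →g G}
    (hg : Injective g) : Setoid.ker (g.comp (mkHom hs)) = s := by
  ext u v
  exact hg.eq_iff.trans Quotient.eq

def kerLift (φ : H →g G) : quotientGraph H (Setoid.ker φ) →g G where
  toFun := Setoid.kerLift φ
  map_rel' := by
    rintro _ _ ⟨-, u, v, rfl, rfl, huv⟩
    exact φ.map_adj huv

theorem kerLift_injective (φ : H →g G) : Injective (kerLift φ) :=
  Setoid.kerLift_injective φ

theorem kerLift_comp_mkHom (φ : H →g G) (hs : ∀ u v, Setoid.ker φ u v → ¬ H.Adj u v) :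
    (kerLift φ).comp (mkHom hs) = φ :=
  rfl

end quotientGraph

open quotientGraph

section QuotientEmbedding

variable {V W : Type*} {H : SimpleGraph V} {G : SimpleGraph W}

variable (H G) in
abbrev QuotientEmbedding :=
  Σ s : {s : Setoid V // EdgeInjectivePartition H s},
    {g : quotientGraph H s.1 →g G // Injective ⇑g}

def QuotientEmbedding.ofEdgeInjective (φ : H →g G) (hφ : EdgeInjective φ) :
    QuotientEmbedding H G :=
  ⟨⟨Setoid.ker φ, hφ.edgeInjectivePartition_ker⟩, kerLift φ, kerLift_injective φ⟩

def QuotientEmbedding.toHom (p : QuotientEmbedding H G) : H →g G :=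
  p.2.1.comp (mkHom p.1.2.1)

theorem QuotientEmbedding.edgeInjective_toHom (p : QuotientEmbedding H G) :
    EdgeInjective p.toHom :=
  (edgeInjective_of_injective p.2.2).comp (edgeInjective_mkHom p.1.2)

theorem QuotientEmbedding.ofEdgeInjective_toHom (p : QuotientEmbedding H G) :
    ofEdgeInjective p.toHom p.edgeInjective_toHom = p := by
  obtain ⟨⟨s, hs⟩, g, hg⟩ := p
  -- Generalize `toHom` to an arbitrary `φ` so that `ker φ = s` can be substituted for `s`.
  suffices ∀ (φ : H →g G) (hφ : EdgeInjective φ), φ = g.comp (mkHom hs.1) →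
      ofEdgeInjective φ hφ = ⟨⟨s, hs⟩, g, hg⟩ from this _ _ rfl
  intro φ hφ hφg
  obtain rfl : Setoid.ker φ = s := hφg ▸ ker_comp_mkHom hg
  refine Sigma.ext rfl (heq_of_eq (Subtype.ext (RelHom.ext fun A => ?_)))
  induction A using Quotient.ind
  exact congr($hφg _)

variable (H G) in
def edgeInjectiveEquivQuotientEmbedding :
    {φ : H →g G // EdgeInjective φ} ≃ QuotientEmbedding H G where
  toFun φ := .ofEdgeInjective φ.1 φ.2
  invFun p := ⟨p.toHom, p.edgeInjective_toHom⟩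
  left_inv φ := Subtype.ext (kerLift_comp_mkHom φ.1 φ.2.edgeInjectivePartition_ker.1)
  right_inv := QuotientEmbedding.ofEdgeInjective_toHom

end QuotientEmbedding

theorem edgeInjective_eq_sum_embeddings_of_quotients
    {VH VG : Type*} [Fintype VH] [Fintype VG]
    (H : SimpleGraph VH) (G : SimpleGraph VG) :
    (Nat.card {φ : H →g G // EdgeInjective φ} =
      ∑ᶠ s : {s : Setoid VH // EdgeInjectivePartition H s},
        Nat.card {g : quotientGraph H s.1 →g G // Function.Injective ⇑g}) ∧
    Nonempty ({φ : H →g G // EdgeInjective φ} ≃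
      Σ s : {s : Setoid VH // EdgeInjectivePartition H s},
        {g : quotientGraph H s.1 →g G // Function.Injective ⇑g}) := by
  let e := edgeInjectiveEquivQuotientEmbedding H G
  refine ⟨?_, ⟨e⟩⟩
  have := Fintype.ofFinite {s : Setoid VH // EdgeInjectivePartition H s}
  rw [Nat.card_congr e, Nat.card_sigma, finsum_eq_sum_of_fintype]
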